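/- arXiv:1706.05468 — 5 statements merged into one kernel-verified Lean document; each statement's English description precedes it below -/
import Mathlib

section
/- For adversarial channels Ω1 : X ⇝ Y and Ω2 : Y ⇝ Z, the one-shot capacity of the concatenation satisfies C(Ω1 ▸ Ω2) ≤ min{ C(Ω1), C(Ω2) }. -/
open Set

/-- A code `C` is good for the channel `Ω` if it is nonempty and the fan-out sets of
distinct codewords are disjoint. -/
def IsGoodCode {X Y : Type*} (Ω : X → Set Y) (C : Finset X) : Prop :=
  C.Nonempty ∧ ∀ x ∈ C, ∀ x' ∈ C, x ≠ x' → Ω x ∩ Ω x' = ∅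

/-- The largest cardinality of a good code for `Ω`. -/
noncomputable def maxGoodCode {X Y : Type*} [Fintype X] (Ω : X → Set Y) : ℕ :=
  sSup {n : ℕ | ∃ C : Finset X, IsGoodCode Ω C ∧ C.card = n}

/-- The one-shot capacity of a channel (base-2 logarithm). -/
noncomputable def oneShotCap {X Y : Type*} [Fintype X] (Ω : X → Set Y) : ℝ :=
  Real.logb 2 (maxGoodCode Ω)

/-- The product of two channels. -/
def chProd {X1 Y1 X2 Y2 : Type*} (Ω1 : X1 → Set Y1) (Ω2 : X2 → Set Y2) :
    X1 × X2 → Set (Y1 × Y2) :=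
  fun p => Ω1 p.1 ×ˢ Ω2 p.2

/-- The `n`-th power of a channel. -/
def chPow {X Y : Type*} (Ω : X → Set Y) (n : ℕ) :
    (Fin n → X) → Set (Fin n → Y) :=
  fun x => Set.univ.pi fun k => Ω (x k)

/-- The zero-error capacity of a channel: `sup { C(Ω^n)/n : n ≥ 1 }` (base 2). -/
noncomputable def zeroErrorCap {X Y : Type*} [Fintype X] (Ω : X → Set Y) : ℝ :=
  sSup {r : ℝ | ∃ n : ℕ, 1 ≤ n ∧ r = oneShotCap (chPow Ω n) / n}

/-- Concatenation of channels: `(Ω1 ▸ Ω2)(x) = ⋃_{y ∈ Ω1(x)} Ω2(y)`. -/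
def chConcat {X Y Z : Type*} (Ω1 : X → Set Y) (Ω2 : Y → Set Z) : X → Set Z :=
  fun x => ⋃ y ∈ Ω1 x, Ω2 y

/-- Union of a family of channels with the same alphabets. -/
def chUnion {I X Y : Type*} (Ω : I → X → Set Y) : X → Set Y :=
  fun x => ⋃ i, Ω i x

/-- Channels are isomorphic if there is a bijection of input alphabets preserving the
adjacency function (i.e. preserving nonemptiness of pairwise intersections of fan-out sets). -/
def ChIso {X1 Y1 X2 Y2 : Type*} (Ω1 : X1 → Set Y1) (Ω2 : X2 → Set Y2) : Prop :=
  ∃ f : X1 ≃ X2, ∀ x x' : X1,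
    ((Ω1 x ∩ Ω1 x').Nonempty ↔ (Ω2 (f x) ∩ Ω2 (f x')).Nonempty)

/-- One-shot capacity expressed as a logarithm in base `q`. -/
noncomputable def capBase {X Y : Type*} [Fintype X] (q : ℕ) (Ω : X → Set Y) : ℝ :=
  Real.logb q (maxGoodCode Ω)

/-- Zero-error capacity expressed as a logarithm in base `q`. -/
noncomputable def zeroCapBase {X Y : Type*} [Fintype X] (q : ℕ) (Ω : X → Set Y) : ℝ :=
  sSup {r : ℝ | ∃ n : ℕ, 1 ≤ n ∧ r = capBase q (chPow Ω n) / n}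

/-- The product of a finite family of channels. -/
def chPi {n : ℕ} {X Y : Fin n → Type*} (Ω : ∀ k, X k → Set (Y k)) :
    (∀ k, X k) → Set (∀ k, Y k) :=
  fun x => Set.univ.pi fun k => Ω k (x k)

/-- The `m`-fold concatenation `Ψ 0 ▸ Ψ 1 ▸ ⋯ ▸ Ψ (m-1)` of a chain of channels. -/
def chChain {Z : ℕ → Type*} (Ψ : ∀ i, Z i → Set (Z (i + 1))) : ∀ m, Z 0 → Set (Z m)
  | 0 => fun x => {x}
  | m + 1 => chConcat (chChain Ψ m) (Ψ m)

/-- Concatenation of a list of channels on a fixed alphabet. -/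
def chainList {W : Type*} : List (W → Set W) → (W → Set W)
  | [] => fun x => {x}
  | Ω :: rest => chConcat Ω (chainList rest)

-- auxiliary lemmas

lemma goodCodeSet_bddAbove {X Y : Type*} [Fintype X] (Ω : X → Set Y) :
    BddAbove {n : ℕ | ∃ C : Finset X, IsGoodCode Ω C ∧ C.card = n} := by
  refine ⟨Fintype.card X, fun n ⟨C, _, hc⟩ => ?_⟩
  exact hc ▸ C.card_le_univ

lemma maxGoodCode_le_of_map {X X' Y Y' : Type*} [Fintype X] [Fintype X']
    (Ω : X → Set Y) (Ω' : X' → Set Y')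
    (h : ∀ C : Finset X, IsGoodCode Ω C →
      ∃ C' : Finset X', IsGoodCode Ω' C' ∧ C.card ≤ C'.card)
    (hne : ∃ C : Finset X, IsGoodCode Ω C) :
    maxGoodCode Ω ≤ maxGoodCode Ω' := by
  obtain ⟨C0, hC0⟩ := hne
  refine csSup_le ⟨C0.card, C0, hC0, rfl⟩ ?_
  rintro n ⟨C, hC, rfl⟩
  obtain ⟨C', hC', hle⟩ := h C hC
  exact hle.trans (le_csSup (goodCodeSet_bddAbove Ω') ⟨C', hC', rfl⟩)

lemma one_le_maxGoodCode {X Y : Type*} [Fintype X] [Nonempty X] (Ω : X → Set Y) :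
    1 ≤ maxGoodCode Ω := by
  obtain ⟨x⟩ := ‹Nonempty X›
  refine le_csSup (goodCodeSet_bddAbove Ω) ⟨{x}, ⟨Finset.singleton_nonempty x, ?_⟩, Finset.card_singleton x⟩
  intro a ha b hb hab
  simp only [Finset.mem_singleton] at ha hb
  exact absurd (ha.trans hb.symm) hab

lemma oneShotCap_le_of_maxGoodCode_le {X Y X' Y' : Type*} [Fintype X] [Fintype X']
    (Ω : X → Set Y) (Ω' : X' → Set Y') (hpos : 1 ≤ maxGoodCode Ω)
    (h : maxGoodCode Ω ≤ maxGoodCode Ω') : oneShotCap Ω ≤ oneShotCap Ω' := by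
  unfold oneShotCap
  apply Real.logb_le_logb_of_le (by norm_num : (1:ℝ) < 2)
  · exact_mod_cast hpos
  · exact_mod_cast h

/-- `C(Ω1 ▸ Ω2) ≤ min{C(Ω1), C(Ω2)}`. -/
theorem oneShotCap_chConcat_le_min {X Y Z : Type*}
    [Fintype X] [Fintype Y] [Fintype Z] [Nonempty X] [Nonempty Y] [Nonempty Z]
    (Ω1 : X → Set Y) (Ω2 : Y → Set Z)
    (h1 : ∀ x, (Ω1 x).Nonempty) (h2 : ∀ y, (Ω2 y).Nonempty) :
    oneShotCap (chConcat Ω1 Ω2) ≤ min (oneShotCap Ω1) (oneShotCap Ω2) := by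
  refine le_min (oneShotCap_le_of_maxGoodCode_le _ Ω1 (one_le_maxGoodCode _) ?_)
    (oneShotCap_le_of_maxGoodCode_le _ Ω2 (one_le_maxGoodCode _) ?_)
  · -- a good code for the concatenation is good for Ω1
    refine maxGoodCode_le_of_map _ _ ?_ ?_
    · intro C hC
      refine ⟨C, ⟨hC.1, ?_⟩, le_rfl⟩
      intro x hx x' hx' hne
      by_contra hne1
      obtain ⟨y, hy, hy'⟩ := Set.nonempty_iff_ne_empty.mpr hne1
      have hd := hC.2 x hx x' hx' hne
      obtain ⟨z, hz⟩ := h2 y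
      have : z ∈ chConcat Ω1 Ω2 x ∩ chConcat Ω1 Ω2 x' := by
        constructor
        · exact Set.mem_biUnion hy hz
        · exact Set.mem_biUnion hy' hz
      rw [hd] at this
      exact this
    · obtain ⟨x⟩ := ‹Nonempty X›
      refine ⟨{x}, Finset.singleton_nonempty x, ?_⟩
      intro a ha b hb hab
      simp only [Finset.mem_singleton] at ha hb
      exact absurd (ha.trans hb.symm) hab
  · -- map each codeword x to some y ∈ Ω1 x; the image is a good code for Ω2
    refine maxGoodCode_le_of_map _ _ ?_ ?_
    · intro C hC
      classical
      choose f hf using h1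
      refine ⟨C.image f, ⟨hC.1.image f, ?_⟩, ?_⟩
      · intro y hy y' hy' hney
        simp only [Finset.mem_image] at hy hy'
        obtain ⟨x, hx, rfl⟩ := hy
        obtain ⟨x', hx', rfl⟩ := hy'
        have hnex : x ≠ x' := fun h => hney (h ▸ rfl)
        have hd := hC.2 x hx x' hx' hnex
        ext z
        simp only [Set.mem_inter_iff, Set.mem_empty_iff_false, iff_false, not_and]
        intro hz hz'
        have : z ∈ chConcat Ω1 Ω2 x ∩ chConcat Ω1 Ω2 x' :=
          ⟨Set.mem_biUnion (hf x) hz, Set.mem_biUnion (hf x') hz'⟩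
        rw [hd] at this
        exact this
      · refine le_of_eq (Finset.card_image_of_injOn ?_).symm
        intro x hx x' hx' hfe
        by_contra hne
        have hd := hC.2 x hx x' hx' hne
        obtain ⟨z, hz⟩ := h2 (f x)
        have : z ∈ chConcat Ω1 Ω2 x ∩ chConcat Ω1 Ω2 x' :=
          ⟨Set.mem_biUnion (hf x) hz, Set.mem_biUnion (hf x') (hfe ▸ hz)⟩
        rw [hd] at this
        exact this
    · obtain ⟨x⟩ := ‹Nonempty X›
      refine ⟨{x}, Finset.singleton_nonempty x, ?_⟩
      intro a ha b hb hab
      simp only [Finset.mem_singleton] at ha hb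
      exact absurd (ha.trans hb.symm) hab
end

section
/- Let U ⊆ {1,...,s} be a set of cardinality u = |U| and let t, e ≥ 0 be integers. Then the one-shot capacity of the Hamming-type channel H_{t,e}⟨U⟩ equals C(H_{t,e}⟨U⟩) = s − u + β(A, u, 2t+e+1). -/
open Set

/-- The `U`-discrepancy between `y ∈ Â^s` and `x ∈ A^s`: the number of positions of `U`
where `y` carries an alphabet symbol different from the one of `x`. -/
def discrepancy {A : Type*} [DecidableEq A] {s : ℕ}
    (y : Fin s → Option A) (x : Fin s → A) (U : Finset (Fin s)) : ℕ :=
  (U.filter fun i => y i ≠ none ∧ y i ≠ some (x i)).card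

/-- The `U`-erasure weight of `y ∈ Â^s`. -/
def erasureWeight {A : Type*} [DecidableEq A] {s : ℕ}
    (y : Fin s → Option A) (U : Finset (Fin s)) : ℕ :=
  (U.filter fun i => y i = none).card

/-- The Hamming-type channel `H_{t,e}⟨U⟩ : A^s ⇝ Â^s` of a single adversary acting on
the coordinates in `U` with error power `t` and erasure power `e`. -/
def HP {A : Type*} [DecidableEq A] {s : ℕ} (t e : ℕ) (U : Finset (Fin s)) :
    (Fin s → A) → Set (Fin s → Option A) :=
  fun x => {y | (∀ i, i ∉ U → y i = some (x i)) ∧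
    discrepancy y x U ≤ t ∧ erasureWeight y U ≤ e}

/-- The Hamming-type channel `H_{t,e}⟨U⟩ : A^s ⇝ Â^s` of `L` adversaries acting on the
coordinate sets `U 0, ..., U (L-1)` with error powers `t` and erasure powers `e`. -/
def HB {A : Type*} [DecidableEq A] {s L : ℕ} (t e : Fin L → ℕ)
    (U : Fin L → Finset (Fin s)) :
    (Fin s → A) → Set (Fin s → Option A) :=
  fun x => {y | (∀ i, (∀ ℓ, i ∉ U ℓ) → y i = some (x i)) ∧
    ∀ ℓ, discrepancy y x (U ℓ) ≤ t ℓ ∧ erasureWeight y (U ℓ) ≤ e ℓ}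

/-- `β(A,u,d)`: base-`|A|` logarithm of the largest cardinality of a code `C ⊆ A^u`
with `|C| ≥ 2` and minimum Hamming distance at least `d` (and `0` if no such code exists,
since then the `sSup` is `0`). -/
noncomputable def betaParam (A : Type*) [Fintype A] [DecidableEq A] (u d : ℕ) : ℝ :=
  Real.logb (Fintype.card A)
    ((sSup {n : ℕ | ∃ C : Finset (Fin u → A), 2 ≤ C.card ∧
      (∀ x ∈ C, ∀ x' ∈ C, x ≠ x' → d ≤ hammingDist x x') ∧ C.card = n} : ℕ) : ℝ)

/-- The compound channel `H_{t,e}⟨U⟩^{n,rest}`: union of the `n`-th powers of the channels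
`H_{t,e}⟨V⟩` over all `V` with `V ℓ ⊆ U ℓ` and `|V ℓ| ≤ t ℓ + e ℓ`. -/
def HBcomp {A : Type*} [DecidableEq A] {s L : ℕ} (t e : Fin L → ℕ)
    (U : Fin L → Finset (Fin s)) (n : ℕ) :
    (Fin n → Fin s → A) → Set (Fin n → Fin s → Option A) :=
  fun x => ⋃ (V : Fin L → Finset (Fin s))
      (_ : ∀ ℓ, V ℓ ⊆ U ℓ ∧ (V ℓ).card ≤ t ℓ + e ℓ),
    chPow (HB t e V) n x

/-- The compound zero-error capacity of `H_{t,e}⟨U⟩`, base `q`. -/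
noncomputable def compoundCapBase (A : Type*) [Fintype A] [DecidableEq A] {s L : ℕ}
    (q : ℕ) (t e : Fin L → ℕ) (U : Fin L → Finset (Fin s)) : ℝ :=
  sSup {r : ℝ | ∃ n : ℕ, 1 ≤ n ∧ r = capBase q (HBcomp (A := A) t e U n) / n}

set_option linter.unusedSectionVars false
set_option linter.unusedVariables false
section AuxCap

open Finset

variable {A : Type*} [Fintype A] [DecidableEq A] {s : ℕ}

/-- Hamming distance restricted to the positions in `U`. -/
private def distOn (U : Finset (Fin s)) (x x' : Fin s → A) : ℕ :=
  (U.filter fun i => x i ≠ x' i).card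

private lemma HP_adj (t e : ℕ) (U : Finset (Fin s)) (x x' : Fin s → A) :
    (HP t e U x ∩ HP t e U x').Nonempty ↔
      (∀ i ∉ U, x i = x' i) ∧ distOn U x x' ≤ 2 * t + e := by
  constructor
  · rintro ⟨y, ⟨h1, h2, h3⟩, h1', h2', h3'⟩
    refine ⟨fun i hi => Option.some_injective _ ((h1 i hi).symm.trans (h1' i hi)), ?_⟩
    have hsub : (U.filter fun i => x i ≠ x' i) ⊆
        ((U.filter fun i => y i ≠ none ∧ y i ≠ some (x i)) ∪
          U.filter fun i => y i ≠ none ∧ y i ≠ some (x' i)) ∪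
          U.filter fun i => y i = none := by
      intro i hi
      obtain ⟨hiU, hne⟩ := mem_filter.mp hi
      rcases hy : y i with _ | a
      · exact mem_union_right _ (mem_filter.mpr ⟨hiU, hy⟩)
      · by_cases hax : a = x i
        · subst hax
          refine mem_union_left _ (mem_union_right _ (mem_filter.mpr ⟨hiU, by simp [hy], ?_⟩))
          simp only [hy, ne_eq, Option.some.injEq]
          exact fun h => hne h
        · exact mem_union_left _ (mem_union_left _
            (mem_filter.mpr ⟨hiU, by simp [hy], by simp [hy, hax]⟩))
    have hc1 := Finset.card_le_card hsub
    have hc2 := card_union_le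
      ((U.filter fun i => y i ≠ none ∧ y i ≠ some (x i)) ∪
        U.filter fun i => y i ≠ none ∧ y i ≠ some (x' i))
      (U.filter fun i => y i = none)
    have hc3 := card_union_le (U.filter fun i => y i ≠ none ∧ y i ≠ some (x i))
      (U.filter fun i => y i ≠ none ∧ y i ≠ some (x' i))
    have hd1 : (U.filter fun i => y i ≠ none ∧ y i ≠ some (x i)).card ≤ t := h2
    have hd2 : (U.filter fun i => y i ≠ none ∧ y i ≠ some (x' i)).card ≤ t := h2'
    have he1 : (U.filter fun i => y i = none).card ≤ e := h3
    unfold distOn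
    omega
  · rintro ⟨hagree, hd⟩
    classical
    set D := U.filter fun i => x i ≠ x' i with hDdef
    obtain ⟨E, hED, hE⟩ := Finset.exists_subset_card_eq (min_le_right e D.card)
    obtain ⟨F, hFDE, hF⟩ := Finset.exists_subset_card_eq (min_le_right t (D \ E).card)
    have hDU : D ⊆ U := filter_subset _ _
    have hEU : E ⊆ U := hED.trans hDU
    have hFD : F ⊆ D := hFDE.trans sdiff_subset
    have hFU : F ⊆ U := hFD.trans hDU
    have hFnE : ∀ i ∈ F, i ∉ E := fun i hi => (mem_sdiff.mp (hFDE hi)).2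
    set y : Fin s → Option A :=
      fun i => if i ∈ E then none else if i ∈ F then some (x' i) else some (x i) with hy
    have hyval : ∀ i, i ∉ E → i ∉ F → y i = some (x i) := by
      intro i h1 h2; simp [hy, h1, h2]
    have hfilE : (U.filter fun i => y i = none) = E := by
      ext i
      simp only [mem_filter, hy]
      constructor
      · rintro ⟨hiU, hnone⟩
        by_contra hiE
        rcases Decidable.em (i ∈ F) with hiF | hiF <;> simp [hiE, hiF] at hnone
      · intro hiE; exact ⟨hEU hiE, by simp [hiE]⟩
    have hfilF : (U.filter fun i => y i ≠ none ∧ y i ≠ some (x i)) = F := by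
      ext i
      simp only [mem_filter]
      constructor
      · rintro ⟨hiU, hni, hnx⟩
        by_contra hiF
        rcases Decidable.em (i ∈ E) with hiE | hiE
        · exact hni (by simp [hy, hiE])
        · exact hnx (hyval i hiE hiF)
      · intro hiF
        have hiE := hFnE i hiF
        have hxx : x i ≠ x' i := (mem_filter.mp (hFD hiF)).2
        refine ⟨hFU hiF, ?_, ?_⟩ <;> simp [hy, hiE, hiF]
        exact fun h => hxx h.symm
    have hfilD : (U.filter fun i => y i ≠ none ∧ y i ≠ some (x' i)) = (D \ E) \ F := by
      ext i
      simp only [mem_filter, Finset.mem_sdiff]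
      constructor
      · rintro ⟨hiU, hni, hnx⟩
        have hiE : i ∉ E := fun h => hni (by simp [hy, h])
        have hiF : i ∉ F := by
          intro h; exact hnx (by simp [hy, hiE, h])
        have : y i = some (x i) := hyval i hiE hiF
        have hxx : x i ≠ x' i := by
          intro h; exact hnx (this.trans (by rw [h]))
        exact ⟨⟨mem_filter.mpr ⟨hiU, hxx⟩, hiE⟩, hiF⟩
      · rintro ⟨⟨hiD, hiE⟩, hiF⟩
        have hiU : i ∈ U := hDU hiD
        have hxx : x i ≠ x' i := (mem_filter.mp hiD).2
        refine ⟨hiU, ?_, ?_⟩ <;> simp [hyval i hiE hiF, hxx]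
    have hcDE : (D \ E).card = D.card - min e D.card := by rw [Finset.card_sdiff_of_subset hED, hE]
    have hcDEF : ((D \ E) \ F).card = (D \ E).card - min t (D \ E).card := by
      rw [Finset.card_sdiff_of_subset hFDE, hF]
    refine ⟨y, Set.mem_inter ?_ ?_⟩
    · show (∀ i ∉ U, y i = some (x i)) ∧ discrepancy y x U ≤ t ∧ erasureWeight y U ≤ e
      refine ⟨fun i hi => hyval i (fun h => hi (hEU h)) (fun h => hi (hFU h)), ?_, ?_⟩
      · show (U.filter fun i => y i ≠ none ∧ y i ≠ some (x i)).card ≤ t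
        rw [hfilF, hF]; exact min_le_left _ _
      · show (U.filter fun i => y i = none).card ≤ e
        rw [hfilE, hE]; exact min_le_left _ _
    · show (∀ i ∉ U, y i = some (x' i)) ∧ discrepancy y x' U ≤ t ∧ erasureWeight y U ≤ e
      refine ⟨fun i hi => by rw [hyval i (fun h => hi (hEU h)) (fun h => hi (hFU h)),
        hagree i hi], ?_, ?_⟩
      · show (U.filter fun i => y i ≠ none ∧ y i ≠ some (x' i)).card ≤ t
        rw [hfilD]
        have hdc : D.card ≤ 2 * t + e := hd
        omega
      · show (U.filter fun i => y i = none).card ≤ e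
        rw [hfilE, hE]; exact min_le_left _ _

end AuxCap

section AuxCap2

open Finset Real

variable {A : Type*} [Fintype A] [DecidableEq A] {s : ℕ}

private lemma distOn_eq_hamming (U : Finset (Fin s)) (x x' : Fin s → A) :
    distOn U x x' =
      hammingDist (fun j : Fin U.card => x (U.equivFin.symm j : Fin s))
        (fun j : Fin U.card => x' (U.equivFin.symm j : Fin s)) := by
  classical
  unfold distOn hammingDist
  refine Finset.card_bij' (fun a ha => U.equivFin ⟨a, (mem_filter.mp ha).1⟩)
    (fun b _ => (U.equivFin.symm b : Fin s)) ?_ ?_ ?_ ?_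
  · intro a ha
    simp only [mem_filter, mem_univ, true_and]
    simpa using (mem_filter.mp ha).2
  · intro b hb
    refine mem_filter.mpr ⟨(U.equivFin.symm b).2, ?_⟩
    simpa using (mem_filter.mp hb).2
  · intro a ha
    simp
  · intro b hb
    simp [Subtype.coe_eta]

private lemma maxGood_HP (hA : 2 ≤ Fintype.card A) (U : Finset (Fin s)) (t e : ℕ) :
    maxGoodCode (HP (A := A) t e U)
      = Fintype.card A ^ (s - U.card) *
        max (sSup {n : ℕ | ∃ C : Finset (Fin U.card → A), 2 ≤ C.card ∧
          (∀ x ∈ C, ∀ x' ∈ C, x ≠ x' → 2 * t + e + 1 ≤ hammingDist x x') ∧ C.card = n}) 1 := by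
  classical
  have hAne : Nonempty A := Fintype.card_pos_iff.mp (by omega)
  set q := Fintype.card A with hq
  set u := U.card with hu
  set d := 2 * t + e + 1 with hdd
  set S := {n : ℕ | ∃ C : Finset (Fin u → A), 2 ≤ C.card ∧
      (∀ x ∈ C, ∀ x' ∈ C, x ≠ x' → d ≤ hammingDist x x') ∧ C.card = n} with hS
  set M := sSup S with hM
  set K := max M 1 with hK
  set eU := U.equivFin with heU
  set g : (Fin s → A) → (Fin u → A) := fun x j => x (eU.symm j : Fin s) with hg
  have hgdist : ∀ x x' : Fin s → A, hammingDist (g x) (g x') = distOn U x x' :=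
    fun x x' => (distOn_eq_hamming U x x').symm
  have hSbdd : BddAbove S := by
    refine ⟨q ^ u, fun n hn => ?_⟩
    obtain ⟨C, _, _, hc⟩ := hn
    calc n = C.card := hc.symm
      _ ≤ Fintype.card (Fin u → A) := C.card_le_univ.trans_eq (by simp)
      _ = q ^ u := by simp [hq]
  -- a distance-d code of cardinality K
  obtain ⟨Dc, hDcard, hDdist⟩ :
      ∃ Dc : Finset (Fin u → A), Dc.card = K ∧
        ∀ w ∈ Dc, ∀ w' ∈ Dc, w ≠ w' → d ≤ hammingDist w w' := by
    by_cases hSne : S.Nonempty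
    · obtain ⟨C, hC2, hCd, hCc⟩ := Nat.sSup_mem hSne hSbdd
      have h2M : 2 ≤ M := by rw [hM, ← hCc]; exact hC2
      have : K = M := max_eq_left (by omega)
      exact ⟨C, by rw [hCc, ← hM, this], hCd⟩
    · have hM0 : M = 0 := by
        rw [hM, Set.not_nonempty_iff_eq_empty.mp hSne, csSup_empty]; rfl
      refine ⟨{fun _ => Classical.arbitrary A}, by simp [hK, hM0], by simp⟩
  -- the embedding producing the good code
  set φ : ({i : Fin s // i ∉ U} → A) × (Fin u → A) → (Fin s → A) :=
    fun p i => if h : i ∈ U then p.2 (eU ⟨i, h⟩) else p.1 ⟨i, h⟩ with hφ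
  have hφinj : Function.Injective φ := by
    intro p p' h
    have h1 : p.1 = p'.1 := by
      funext i
      have := congrFun h i.val
      simpa [hφ, i.2] using this
    have h2 : p.2 = p'.2 := by
      funext j
      have hiU : ((eU.symm j : {x // x ∈ U}) : Fin s) ∈ U := (eU.symm j).2
      have := congrFun h (eU.symm j : Fin s)
      simpa [hφ, hiU, Subtype.coe_eta] using this
    exact Prod.ext h1 h2
  have hgφ : ∀ p, g (φ p) = p.2 := by
    intro p
    funext j
    have hiU : ((eU.symm j : {x // x ∈ U}) : Fin s) ∈ U := (eU.symm j).2
    simp [hg, hφ, hiU, Subtype.coe_eta]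
  have hcardPi : Fintype.card ({i : Fin s // i ∉ U} → A) = q ^ (s - u) := by
    rw [Fintype.card_fun]
    congr 1
    rw [Fintype.card_subtype_compl]
    simp [hu]
  set C0 : Finset (Fin s → A) := (Finset.univ ×ˢ Dc).image φ with hC0
  have hC0card : C0.card = q ^ (s - u) * K := by
    rw [hC0, Finset.card_image_of_injective _ hφinj, Finset.card_product, hDcard,
      Finset.card_univ, hcardPi]
  have hDne : Dc.Nonempty := by
    rw [← Finset.card_pos, hDcard]; exact lt_of_lt_of_le one_pos (le_max_right _ _)
  have hC0good : IsGoodCode (HP (A := A) t e U) C0 := by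
    constructor
    · obtain ⟨w, hw⟩ := hDne
      exact ⟨φ (fun _ => Classical.arbitrary A, w),
        Finset.mem_image_of_mem _ (Finset.mem_product.mpr ⟨Finset.mem_univ _, hw⟩)⟩
    · intro x hx x' hx' hne
      rw [← Set.not_nonempty_iff_eq_empty, HP_adj]
      obtain ⟨p, hp, rfl⟩ := Finset.mem_image.mp hx
      obtain ⟨p', hp', rfl⟩ := Finset.mem_image.mp hx'
      rintro ⟨hag, hle⟩
      by_cases hp1 : p.1 = p'.1
      · have hp2 : p.2 ≠ p'.2 := fun h => hne (by rw [Prod.ext hp1 h])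
        have hd2 : d ≤ hammingDist p.2 p'.2 :=
          hDdist _ (Finset.mem_product.mp hp).2 _ (Finset.mem_product.mp hp').2 hp2
        rw [← hgφ p, ← hgφ p', hgdist] at hd2
        omega
      · obtain ⟨i, hi⟩ := Function.ne_iff.mp hp1
        have := hag i.val i.2
        simp only [hφ, dif_neg i.2] at this
        exact hi (by simpa [Subtype.coe_eta] using this)
  -- the sSup computation
  have hub : ∀ n ∈ {n : ℕ | ∃ C : Finset (Fin s → A),
      IsGoodCode (HP (A := A) t e U) C ∧ C.card = n}, n ≤ q ^ (s - u) * K := by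
    rintro n ⟨C, ⟨_, hgood⟩, rfl⟩
    set r : (Fin s → A) → ({i : Fin s // i ∉ U} → A) := fun x i => x i.val with hr
    have key : ∀ x ∈ C, ∀ x' ∈ C, x ≠ x' → r x = r x' → d ≤ distOn U x x' := by
      intro x hx x' hx' hne hrr
      have h0 := hgood x hx x' hx' hne
      rw [← Set.not_nonempty_iff_eq_empty, HP_adj] at h0
      have hag : ∀ i ∉ U, x i = x' i := fun i hi => congrFun hrr ⟨i, hi⟩
      by_contra hlt
      exact h0 ⟨hag, by omega⟩
    have hsum : C.card = ∑ z ∈ C.image r, (C.filter fun x => r x = z).card :=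
      Finset.card_eq_sum_card_fiberwise fun x hx => Finset.mem_image_of_mem r hx
    have hfiber : ∀ z ∈ C.image r, (C.filter fun x => r x = z).card ≤ K := by
      intro z _
      set F := C.filter fun x => r x = z with hF
      rcases le_or_gt F.card 1 with h1 | h1
      · exact h1.trans (le_max_right _ _)
      · have hinj : Set.InjOn g F := by
          intro x hx x' hx' hgg
          by_contra hne
          have hxc := Finset.mem_filter.mp hx
          have hxc' := Finset.mem_filter.mp hx'
          have := key x hxc.1 x' hxc'.1 hne (hxc.2.trans hxc'.2.symm)
          rw [← hgdist, hgg, hammingDist_self] at this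
          omega
        have hmem : F.card ∈ S := by
          refine ⟨F.image g, ?_, ?_, Finset.card_image_of_injOn hinj⟩
          · rw [Finset.card_image_of_injOn hinj]; omega
          · intro w hw w' hw' hww
            obtain ⟨x, hx, rfl⟩ := Finset.mem_image.mp hw
            obtain ⟨x', hx', rfl⟩ := Finset.mem_image.mp hw'
            have hxc := Finset.mem_filter.mp hx
            have hxc' := Finset.mem_filter.mp hx'
            have hne : x ≠ x' := fun h => hww (by rw [h])
            rw [hgdist]
            exact key x hxc.1 x' hxc'.1 hne (hxc.2.trans hxc'.2.symm)
        exact (le_csSup hSbdd hmem).trans (le_max_left _ _)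
    have himg : (C.image r).card ≤ q ^ (s - u) := by
      calc (C.image r).card ≤ Fintype.card ({i : Fin s // i ∉ U} → A) :=
            (C.image r).card_le_univ.trans_eq (by simp)
        _ = q ^ (s - u) := hcardPi
    calc C.card = ∑ z ∈ C.image r, (C.filter fun x => r x = z).card := hsum
      _ ≤ (C.image r).card * K := by
          have := Finset.sum_le_card_nsmul (C.image r)
            (fun z => (C.filter fun x => r x = z).card) K hfiber
          simpa [smul_eq_mul] using this
      _ ≤ q ^ (s - u) * K := Nat.mul_le_mul_right _ himg
  have hmem : q ^ (s - u) * K ∈ {n : ℕ | ∃ C : Finset (Fin s → A),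
      IsGoodCode (HP (A := A) t e U) C ∧ C.card = n} := ⟨C0, hC0good, hC0card⟩
  exact le_antisymm (csSup_le ⟨_, hmem⟩ hub) (le_csSup ⟨_, hub⟩ hmem)

end AuxCap2

/-- `C(H_{t,e}⟨U⟩) = s − u + β(A, u, 2t+e+1)` where `u = |U|`. -/
theorem capBase_HP_eq {A : Type*} [Fintype A] [DecidableEq A]
    (hA : 2 ≤ Fintype.card A) {s : ℕ} (hs : 1 ≤ s)
    (U : Finset (Fin s)) (t e : ℕ) :
    capBase (Fintype.card A) (HP (A := A) t e U)
      = (s : ℝ) - U.card + betaParam A U.card (2 * t + e + 1) := by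
  classical
  set q := Fintype.card A with hq
  set u := U.card with hu
  set S := {n : ℕ | ∃ C : Finset (Fin u → A), 2 ≤ C.card ∧
      (∀ x ∈ C, ∀ x' ∈ C, x ≠ x' → 2 * t + e + 1 ≤ hammingDist x x') ∧ C.card = n} with hS
  set M := sSup S with hM
  have husle : u ≤ s := by simpa [hu] using U.card_le_univ
  have hq1 : (1 : ℝ) < q := by exact_mod_cast (by omega : 1 < q)
  have hqpos : (0 : ℝ) < q := by linarith
  have hbeta : betaParam A u (2 * t + e + 1) = Real.logb q (M : ℝ) := rfl
  have hcap : capBase q (HP (A := A) t e U)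
      = Real.logb q ((q ^ (s - u) * max M 1 : ℕ) : ℝ) := by
    unfold capBase maxGoodCode
    rw [show sSup {n : ℕ | ∃ C : Finset (Fin s → A),
        IsGoodCode (HP (A := A) t e U) C ∧ C.card = n} = q ^ (s - u) * max M 1 from
      maxGood_HP hA U t e]
  have hlogpow : Real.logb q ((q : ℝ) ^ (s - u)) = (s : ℝ) - u := by
    rw [Real.logb_pow, Real.logb_self_eq_one hq1]
    push_cast [Nat.cast_sub husle]
    ring
  rw [hcap, hbeta]
  by_cases hSne : S.Nonempty
  · have hSbdd : BddAbove S := by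
      refine ⟨q ^ u, fun n hn => ?_⟩
      obtain ⟨C, _, _, hc⟩ := hn
      calc n = C.card := hc.symm
        _ ≤ Fintype.card (Fin u → A) := C.card_le_univ.trans_eq (by simp)
        _ = q ^ u := by simp [hq]
    obtain ⟨C, hC2, _, hCc⟩ := Nat.sSup_mem hSne hSbdd
    have h2M : 2 ≤ M := by rw [hM, ← hCc]; exact hC2
    have hKM : max M 1 = M := max_eq_left (by omega)
    rw [hKM]
    push_cast
    rw [Real.logb_mul (by positivity) (by exact_mod_cast (by omega : M ≠ 0))]
    rw [hlogpow]
  · have hM0 : M = 0 := by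
      rw [hM, Set.not_nonempty_iff_eq_empty.mp hSne, csSup_empty]; rfl
    rw [hM0]
    simp only [Nat.cast_zero, Real.logb_zero, add_zero, max_eq_right (Nat.zero_le 1), mul_one]
    push_cast
    exact hlogpow
end

section
/- Let L ≥ 1, let U_1,...,U_L ⊆ {1,...,s} be pairwise disjoint, and let t = (t_1,...,t_L), e = (e_1,...,e_L) be tuples of nonnegative integers. There exists a number q0 such that for every finite field F_q with q ≥ q0, taking the alphabet A = F_q, the one-shot capacity of the multi-adversary Hamming-type channel satisfies C(H_{t,e}⟨U⟩) = s − Σ_{ℓ=1}^L min{2t_ℓ + e_ℓ, |U_ℓ|}. -/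
open Set

lemma rs_disagree {F : Type} [Field F] [DecidableEq F] {s k : ℕ} (ι : Fin s ↪ F)
    (W : Finset (Fin s)) {c c' : Fin k → F} (h : c ≠ c') :
    W.card - (k - 1) ≤ (W.filter fun i => (∑ j, c j * ι i ^ (j : ℕ)) ≠ ∑ j, c' j * ι i ^ (j : ℕ)).card := by
  set p : Polynomial F := ∑ j : Fin k, Polynomial.C (c j - c' j) * Polynomial.X ^ (j : ℕ) with hp
  obtain ⟨j0, hj0⟩ : ∃ j, c j ≠ c' j := by
    by_contra hc; push_neg at hc; exact h (funext hc)
  have hpc : p.coeff (j0 : ℕ) = c j0 - c' j0 := by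
    rw [hp, Polynomial.finset_sum_coeff]
    rw [Finset.sum_eq_single j0]
    · rw [Polynomial.coeff_C_mul, Polynomial.coeff_X_pow, if_pos rfl, mul_one]
    · intro b _ hb
      simp only [Polynomial.coeff_C_mul, Polynomial.coeff_X_pow]
      rw [if_neg (fun hh => hb (Fin.ext hh.symm)), mul_zero]
    · simp
  have hpne : p ≠ 0 := fun h0 => by
    rw [h0] at hpc; simp at hpc
    exact hj0 (sub_eq_zero.mp hpc.symm)
  have hdeg : p.natDegree ≤ k - 1 := by
    apply Polynomial.natDegree_sum_le_of_forall_le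
    intro j _
    calc (Polynomial.C (c j - c' j) * Polynomial.X ^ (j:ℕ)).natDegree
        ≤ (Polynomial.X ^ (j:ℕ) : Polynomial F).natDegree := Polynomial.natDegree_C_mul_le _ _
      _ = (j : ℕ) := Polynomial.natDegree_X_pow _
      _ ≤ k - 1 := by omega
  have heval : ∀ i : Fin s, p.eval (ι i) = (∑ j, c j * ι i ^ (j:ℕ)) - ∑ j, c' j * ι i ^ (j:ℕ) := by
    intro i
    rw [hp]
    simp [Polynomial.eval_finset_sum, sub_mul, Finset.sum_sub_distrib]
  set Ag := W.filter fun i => (∑ j, c j * ι i ^ (j : ℕ)) = ∑ j, c' j * ι i ^ (j : ℕ) with hAg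
  have hA : Ag.card ≤ k - 1 := by
    have himg : Ag.image ι ⊆ p.roots.toFinset := by
      intro a ha
      obtain ⟨i, hi, rfl⟩ := Finset.mem_image.mp ha
      rw [Multiset.mem_toFinset, Polynomial.mem_roots hpne]
      rw [Finset.mem_filter] at hi
      rw [Polynomial.IsRoot, heval, sub_eq_zero]; exact hi.2
    have hc2 : (Ag.image ι).card ≤ p.roots.toFinset.card := Finset.card_le_card himg
    rw [Finset.card_image_of_injective _ ι.injective] at hc2
    calc Ag.card ≤ p.roots.toFinset.card := hc2
      _ ≤ Multiset.card p.roots := Multiset.toFinset_card_le _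
      _ ≤ p.natDegree := Polynomial.card_roots' p
      _ ≤ k - 1 := hdeg
  have hsplit := Finset.card_filter_add_card_filter_not
    (s := W) (p := fun i => (∑ j, c j * ι i ^ (j : ℕ)) = ∑ j, c' j * ι i ^ (j : ℕ))
  simp only [← hAg] at hsplit
  simp only [ne_eq]
  omega
-- DEFS
section AuxConfuse

variable {A : Type*} [DecidableEq A] {s L : ℕ} {t e : Fin L → ℕ} {U : Fin L → Finset (Fin s)}

/-- If the fan-out sets of `x` and `x'` intersect, then `x,x'` agree outside the `U ℓ`
and their restricted Hamming distances are small. -/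
lemma hb_inter_close {x x' : Fin s → A} {y : Fin s → Option A}
    (hy : y ∈ HB t e U x) (hy' : y ∈ HB t e U x') :
    (∀ i, (∀ ℓ, i ∉ U ℓ) → x i = x' i) ∧
    ∀ ℓ, ((U ℓ).filter fun i => x i ≠ x' i).card ≤ 2 * t ℓ + e ℓ := by
  obtain ⟨ho, hd⟩ := hy
  obtain ⟨ho', hd'⟩ := hy'
  constructor
  · intro i hi
    have := (ho i hi).symm.trans (ho' i hi)
    exact Option.some_injective _ this
  · intro ℓ
    set D := (U ℓ).filter fun i => x i ≠ x' i with hD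
    have hsub : D ⊆ ((U ℓ).filter fun i => y i = none) ∪
        (((U ℓ).filter fun i => y i ≠ none ∧ y i ≠ some (x i)) ∪
         ((U ℓ).filter fun i => y i ≠ none ∧ y i ≠ some (x' i))) := by
      intro i hi
      rw [hD, Finset.mem_filter] at hi
      obtain ⟨hiU, hne⟩ := hi
      rcases Classical.em (y i = none) with h0 | h0
      · exact Finset.mem_union_left _ (Finset.mem_filter.mpr ⟨hiU, h0⟩)
      · apply Finset.mem_union_right
        rcases Classical.em (y i = some (x i)) with h1 | h1
        · refine Finset.mem_union_right _ (Finset.mem_filter.mpr ⟨hiU, h0, ?_⟩)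
          rw [h1]; intro hc
          exact hne (Option.some_injective _ hc)
        · exact Finset.mem_union_left _ (Finset.mem_filter.mpr ⟨hiU, h0, h1⟩)
    calc D.card ≤ _ := Finset.card_le_card hsub
      _ ≤ _ + _ := Finset.card_union_le _ _
      _ ≤ _ + (_ + _) := by gcongr; exact Finset.card_union_le _ _
      _ ≤ e ℓ + (t ℓ + t ℓ) := by
          gcongr
          · exact (hd ℓ).2
          · exact (hd ℓ).1
          · exact (hd' ℓ).1
      _ = 2 * t ℓ + e ℓ := by ring
end AuxConfuse
section AuxB
variable {A : Type*} [DecidableEq A] {s L : ℕ}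

/-- If `x,x'` agree outside the `U ℓ` and their restricted distances are at most
`2 t ℓ + e ℓ`, then the fan-out sets intersect. -/
lemma hb_close_inter {t e : Fin L → ℕ} {U : Fin L → Finset (Fin s)}
    (hU : ∀ ℓ ℓ', ℓ ≠ ℓ' → Disjoint (U ℓ) (U ℓ')) {x x' : Fin s → A}
    (hout : ∀ i, (∀ ℓ, i ∉ U ℓ) → x i = x' i)
    (hcl : ∀ ℓ, ((U ℓ).filter fun i => x i ≠ x' i).card ≤ 2 * t ℓ + e ℓ) :
    (HB t e U x ∩ HB t e U x').Nonempty := by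
  classical
  set D : Fin L → Finset (Fin s) := fun ℓ => (U ℓ).filter fun i => x i ≠ x' i with hDdef
  have hDU : ∀ ℓ, D ℓ ⊆ U ℓ := fun ℓ => Finset.filter_subset _ _
  -- erasure part
  have hE : ∀ ℓ, ∃ E ⊆ D ℓ, E.card = min (D ℓ).card (e ℓ) :=
    fun ℓ => Finset.exists_subset_card_eq (min_le_left _ _)
  choose E hED hEcard using hE
  -- part matched to x'
  have hP : ∀ ℓ, ∃ P ⊆ D ℓ \ E ℓ, P.card = min (D ℓ \ E ℓ).card (t ℓ) :=
    fun ℓ => Finset.exists_subset_card_eq (min_le_left _ _)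
  choose P hPD hPcard using hP
  -- unique block containing a coordinate
  have huniq : ∀ {i : Fin s} {ℓ ℓ' : Fin L}, i ∈ U ℓ → i ∈ U ℓ' → ℓ = ℓ' := by
    intro i ℓ ℓ' h1 h2
    by_contra hne
    exact (Finset.disjoint_left.mp (hU ℓ ℓ' hne)) h1 h2
  set EU : Finset (Fin s) := Finset.univ.biUnion E with hEU
  set PU : Finset (Fin s) := Finset.univ.biUnion P with hPU
  set y : Fin s → Option A := fun i =>
    if i ∈ EU then none else if i ∈ PU then some (x' i) else some (x i) with hy
  have hEsub : ∀ {i ℓ}, i ∈ E ℓ → i ∈ U ℓ := fun h => hDU _ (hED _ h)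
  have hPsub : ∀ {i ℓ}, i ∈ P ℓ → i ∈ U ℓ :=
    fun h => hDU _ ((Finset.sdiff_subset) (hPD _ h))
  have hEUmem : ∀ {i ℓ}, i ∈ U ℓ → (i ∈ EU ↔ i ∈ E ℓ) := by
    intro i ℓ hi
    constructor
    · intro h
      obtain ⟨ℓ', _, h'⟩ := Finset.mem_biUnion.mp h
      rwa [huniq (hEsub h') hi] at h'
    · intro h; exact Finset.mem_biUnion.mpr ⟨ℓ, Finset.mem_univ _, h⟩
  have hPUmem : ∀ {i ℓ}, i ∈ U ℓ → (i ∈ PU ↔ i ∈ P ℓ) := by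
    intro i ℓ hi
    constructor
    · intro h
      obtain ⟨ℓ', _, h'⟩ := Finset.mem_biUnion.mp h
      rwa [huniq (hPsub h') hi] at h'
    · intro h; exact Finset.mem_biUnion.mpr ⟨ℓ, Finset.mem_univ _, h⟩
  have houtE : ∀ {i}, (∀ ℓ, i ∉ U ℓ) → i ∉ EU := by
    intro i h hc
    obtain ⟨ℓ', _, h'⟩ := Finset.mem_biUnion.mp hc
    exact h ℓ' (hEsub h')
  have houtP : ∀ {i}, (∀ ℓ, i ∉ U ℓ) → i ∉ PU := by
    intro i h hc
    obtain ⟨ℓ', _, h'⟩ := Finset.mem_biUnion.mp hc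
    exact h ℓ' (hPsub h')
  refine ⟨y, ⟨?_, ?_⟩, ⟨?_, ?_⟩⟩
  · -- y ∈ HB x : outside
    intro i hi
    rw [hy]; simp only
    rw [if_neg (houtE hi), if_neg (houtP hi)]
  · -- y ∈ HB x : bounds
    intro ℓ
    constructor
    · -- discrepancy vs x ≤ t: the bad set is ⊆ P ℓ
      refine le_trans (Finset.card_le_card ?_) (le_trans (le_of_eq (hPcard ℓ)) (min_le_right _ _))
      intro i hi
      rw [Finset.mem_filter] at hi
      obtain ⟨hiU, hn, hx⟩ := hi
      have hiE : i ∉ EU := by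
        intro hc; rw [hy] at hn; simp only at hn; rw [if_pos hc] at hn; exact hn rfl
      by_contra hiP
      have hiPU : i ∉ PU := fun hc => hiP ((hPUmem hiU).mp hc)
      rw [hy] at hx; simp only at hx
      rw [if_neg hiE, if_neg hiPU] at hx
      exact hx rfl
    · -- erasures ≤ e: bad set ⊆ E ℓ
      refine le_trans (Finset.card_le_card ?_) (le_trans (le_of_eq (hEcard ℓ)) (min_le_right _ _))
      intro i hi
      rw [Finset.mem_filter] at hi
      obtain ⟨hiU, hn⟩ := hi
      rw [hy] at hn; simp only at hn
      by_contra hiE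
      have : i ∉ EU := fun hc => hiE ((hEUmem hiU).mp hc)
      rw [if_neg this] at hn
      split at hn <;> simp_all
  · -- y ∈ HB x' : outside
    intro i hi
    rw [hy]; simp only
    rw [if_neg (houtE hi), if_neg (houtP hi), hout i hi]
  · -- y ∈ HB x' : bounds
    intro ℓ
    have hQ : ((D ℓ \ E ℓ) \ P ℓ).card ≤ t ℓ := by
      rw [Finset.card_sdiff_of_subset (hPD ℓ), hPcard ℓ]
      have h1 : (E ℓ).card = min (D ℓ).card (e ℓ) := hEcard ℓ
      have h2 : (D ℓ \ E ℓ).card = (D ℓ).card - (E ℓ).card := Finset.card_sdiff_of_subset (hED ℓ)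
      have h3 : (D ℓ).card ≤ 2 * t ℓ + e ℓ := hcl ℓ
      omega
    constructor
    · -- discrepancy vs x' ≤ t : bad set ⊆ (D \ E) \ P
      refine le_trans (Finset.card_le_card ?_) hQ
      intro i hi
      rw [Finset.mem_filter] at hi
      obtain ⟨hiU, hn, hx⟩ := hi
      have hiE : i ∉ EU := by
        intro hc; rw [hy] at hn; simp only at hn; rw [if_pos hc] at hn; exact hn rfl
      have hiP : i ∉ PU := by
        intro hc
        rw [hy] at hx; simp only at hx
        rw [if_neg hiE, if_pos hc] at hx
        exact hx rfl
      have hval : y i = some (x i) := by rw [hy]; simp only; rw [if_neg hiE, if_neg hiP]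
      have hiD : i ∈ D ℓ := by
        rw [hDdef, Finset.mem_filter]
        refine ⟨hiU, ?_⟩
        intro hc
        rw [hval] at hx
        exact hx (by rw [hc])
      refine Finset.mem_sdiff.mpr ⟨Finset.mem_sdiff.mpr ⟨hiD, ?_⟩, ?_⟩
      · intro hc; exact hiE ((hEUmem hiU).mpr hc)
      · intro hc; exact hiP ((hPUmem hiU).mpr hc)
    · -- erasures ≤ e
      refine le_trans (Finset.card_le_card ?_) (le_trans (le_of_eq (hEcard ℓ)) (min_le_right _ _))
      intro i hi
      rw [Finset.mem_filter] at hi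
      obtain ⟨hiU, hn⟩ := hi
      rw [hy] at hn; simp only at hn
      by_contra hiE
      have : i ∉ EU := fun hc => hiE ((hEUmem hiU).mp hc)
      rw [if_neg this] at hn
      split at hn <;> simp at hn
end AuxB
section AuxLB
/-- Construction of an optimal good code via Reed–Solomon codes on each block. -/
lemma exists_good_code (F : Type) [Field F] [Fintype F] [DecidableEq F] {s L : ℕ}
    (U : Fin L → Finset (Fin s))
    (hU : ∀ ℓ ℓ', ℓ ≠ ℓ' → Disjoint (U ℓ) (U ℓ')) (t e : Fin L → ℕ) (ι : Fin s ↪ F) :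
    ∃ C : Finset (Fin s → F), IsGoodCode (HB t e U) C ∧
      C.card = (Fintype.card F) ^ (s - ∑ ℓ, min (2 * t ℓ + e ℓ) (U ℓ).card) := by
  classical
  set m : Fin L → ℕ := fun ℓ => min (2 * t ℓ + e ℓ) (U ℓ).card with hm
  set kk : Fin L → ℕ := fun ℓ => (U ℓ).card - m ℓ with hkk
  set Tf : Finset (Fin s) := Finset.univ \ Finset.univ.biUnion U with hTf
  have huniq : ∀ {i : Fin s} {ℓ ℓ' : Fin L}, i ∈ U ℓ → i ∈ U ℓ' → ℓ = ℓ' := by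
    intro i ℓ ℓ' h1 h2
    by_contra hne
    exact (Finset.disjoint_left.mp (hU ℓ ℓ' hne)) h1 h2
  have hTfmem : ∀ i : Fin s, i ∈ Tf ↔ ¬ ∃ ℓ, i ∈ U ℓ := by
    intro i
    rw [hTf, Finset.mem_sdiff]
    simp [Finset.mem_biUnion]
  set enc : (({i : Fin s // i ∈ Tf} → F) × (∀ ℓ : Fin L, Fin (kk ℓ) → F)) → (Fin s → F) :=
    fun w i =>
      if h : ∃ ℓ, i ∈ U ℓ then ∑ j, w.2 h.choose j * ι i ^ (j : ℕ)
      else w.1 ⟨i, (hTfmem i).mpr h⟩ with henc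
  have henc1 : ∀ w (ℓ) (i : Fin s), i ∈ U ℓ →
      enc w i = ∑ j, w.2 ℓ j * ι i ^ (j : ℕ) := by
    intro w ℓ i hi
    have hex : ∃ ℓ, i ∈ U ℓ := ⟨ℓ, hi⟩
    rw [henc]; simp only
    rw [dif_pos hex]
    have hch : hex.choose = ℓ := huniq hex.choose_spec hi
    rw [hch]
  have henc0 : ∀ w (i : Fin s) (h : ¬ ∃ ℓ, i ∈ U ℓ),
      enc w i = w.1 ⟨i, (hTfmem i).mpr h⟩ := by
    intro w i h
    rw [henc]; simp only
    rw [dif_neg h]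
  have hdist : ∀ w w' (ℓ : Fin L), w.2 ℓ ≠ w'.2 ℓ →
      2 * t ℓ + e ℓ + 1 ≤ ((U ℓ).filter fun i => enc w i ≠ enc w' i).card := by
    intro w w' ℓ hne
    have hk1 : 1 ≤ kk ℓ := by
      by_contra hk
      apply hne
      have h0 : kk ℓ = 0 := by omega
      funext j
      exact absurd j.isLt (by omega)
    have hmu : m ℓ = 2 * t ℓ + e ℓ ∧ m ℓ < (U ℓ).card := by
      have hkd : kk ℓ = (U ℓ).card - m ℓ := rfl
      have h2 : m ℓ ≤ (U ℓ).card := min_le_right _ _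
      have h3 : m ℓ ≤ 2 * t ℓ + e ℓ := min_le_left _ _
      have h4 : m ℓ = 2 * t ℓ + e ℓ ∨ m ℓ = (U ℓ).card := by
        rcases min_cases (2 * t ℓ + e ℓ) ((U ℓ).card) with h | h
        · exact Or.inl h.1
        · exact Or.inr h.1
      omega
    have hfe : ((U ℓ).filter fun i => enc w i ≠ enc w' i) =
        ((U ℓ).filter fun i => (∑ j, w.2 ℓ j * ι i ^ (j:ℕ)) ≠ ∑ j, w'.2 ℓ j * ι i ^ (j:ℕ)) := by
      apply Finset.filter_congr
      intro i hi
      rw [henc1 w ℓ i hi, henc1 w' ℓ i hi]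
    rw [hfe]
    have hrs := rs_disagree ι (U ℓ) hne
    have hcard : kk ℓ = (U ℓ).card - m ℓ := rfl
    omega
  have hinj : Function.Injective enc := by
    intro w w' hww
    have h2 : ∀ ℓ, w.2 ℓ = w'.2 ℓ := by
      intro ℓ
      by_contra hne
      have hge := hdist w w' ℓ hne
      have hz : ((U ℓ).filter fun i => enc w i ≠ enc w' i) = ∅ := by
        apply Finset.filter_eq_empty_iff.mpr
        intro i _
        rw [hww]
        simp
      rw [hz] at hge
      simp at hge
    have h1 : w.1 = w'.1 := by
      funext i
      have hnex : ¬ ∃ ℓ, (i : Fin s) ∈ U ℓ := (hTfmem i).mp i.2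
      have hcg : enc w i = enc w' i := congrFun hww i
      rw [henc0 w i hnex, henc0 w' i hnex] at hcg
      exact hcg
    exact Prod.ext h1 (funext h2)
  refine ⟨Finset.image enc Finset.univ, ⟨?_, ?_⟩, ?_⟩
  · exact Finset.image_nonempty.mpr Finset.univ_nonempty
  · rintro x hx x' hx' hxx
    obtain ⟨w, -, rfl⟩ := Finset.mem_image.mp hx
    obtain ⟨w', -, rfl⟩ := Finset.mem_image.mp hx'
    by_contra hcon
    obtain ⟨y, hy, hy'⟩ := Set.nonempty_iff_ne_empty.mpr hcon
    obtain ⟨hout, hcl⟩ := hb_inter_close (t := t) (e := e) (U := U) hy hy'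
    rcases Classical.em (w.1 = w'.1) with h1 | h1
    · have hw2 : ∃ ℓ, w.2 ℓ ≠ w'.2 ℓ := by
        by_contra hc
        push_neg at hc
        exact hxx (congrArg enc (Prod.ext h1 (funext hc)))
      obtain ⟨ℓ, hℓ⟩ := hw2
      have hd1 := hdist w w' ℓ hℓ
      have hd2 := hcl ℓ
      omega
    · obtain ⟨i, hi⟩ := Function.ne_iff.mp h1
      have hnex : ¬ ∃ ℓ, (i : Fin s) ∈ U ℓ := (hTfmem i).mp i.2
      have hiout : ∀ ℓ, (i : Fin s) ∉ U ℓ := fun ℓ hc => hnex ⟨ℓ, hc⟩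
      have hoi := hout i hiout
      rw [henc0 w i hnex, henc0 w' i hnex] at hoi
      exact hi hoi
  · rw [Finset.card_image_of_injective _ hinj, Finset.card_univ]
    have hcM : Fintype.card (({i : Fin s // i ∈ Tf} → F) × (∀ ℓ : Fin L, Fin (kk ℓ) → F)) =
        Fintype.card F ^ Tf.card * ∏ ℓ, Fintype.card F ^ kk ℓ := by
      rw [Fintype.card_prod, Fintype.card_fun, Fintype.card_coe, Fintype.card_pi]
      congr 1
      apply Finset.prod_congr rfl
      intro ℓ _
      rw [Fintype.card_fun, Fintype.card_fin]
    rw [hcM, Finset.prod_pow_eq_pow_sum, ← pow_add]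
    congr 1
    have hTc : Tf.card = s - (Finset.univ.biUnion U).card := by
      rw [hTf, Finset.card_sdiff_of_subset (Finset.subset_univ _), Finset.card_univ, Fintype.card_fin]
    have hbU : (Finset.univ.biUnion U).card = ∑ ℓ, (U ℓ).card :=
      Finset.card_biUnion (fun ℓ _ ℓ' _ h => hU ℓ ℓ' h)
    have hbUle : (Finset.univ.biUnion U).card ≤ s := by
      simpa using Finset.card_le_univ (Finset.univ.biUnion U)
    have hkm : ∑ ℓ, kk ℓ = ∑ ℓ, (U ℓ).card - ∑ ℓ, m ℓ := by
      rw [hkk]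
      exact Finset.sum_tsub_distrib Finset.univ (fun ℓ _ => min_le_right _ _)
    have hmle : ∑ ℓ, m ℓ ≤ ∑ ℓ, (U ℓ).card :=
      Finset.sum_le_sum (fun ℓ _ => min_le_right _ _)
    have heta : Finset.univ.sum m = ∑ ℓ, m ℓ := rfl
    have hme : (∑ ℓ, m ℓ) = ∑ ℓ, min (2 * t ℓ + e ℓ) (U ℓ).card := rfl
    omega
end AuxLB
section AuxUB
/-- Singleton-type upper bound on good codes for `HB`. -/
lemma good_code_card_le {A : Type*} [Fintype A] [DecidableEq A] {s L : ℕ}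
    {U : Fin L → Finset (Fin s)}
    (hU : ∀ ℓ ℓ', ℓ ≠ ℓ' → Disjoint (U ℓ) (U ℓ')) {t e : Fin L → ℕ}
    {C : Finset (Fin s → A)} (hC : IsGoodCode (HB t e U) C) :
    C.card ≤ Fintype.card A ^ (s - ∑ ℓ, min (2 * t ℓ + e ℓ) (U ℓ).card) := by
  classical
  set m : Fin L → ℕ := fun ℓ => min (2 * t ℓ + e ℓ) (U ℓ).card with hm
  have hSex : ∀ ℓ, ∃ S ⊆ U ℓ, S.card = m ℓ :=
    fun ℓ => Finset.exists_subset_card_eq (min_le_right _ _)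
  choose S hSU hScard using hSex
  have huniq : ∀ {i : Fin s} {ℓ ℓ' : Fin L}, i ∈ U ℓ → i ∈ U ℓ' → ℓ = ℓ' := by
    intro i ℓ ℓ' h1 h2
    by_contra hne
    exact (Finset.disjoint_left.mp (hU ℓ ℓ' hne)) h1 h2
  set T : Finset (Fin s) := Finset.univ \ Finset.univ.biUnion S with hT
  set r : (Fin s → A) → ({i : Fin s // i ∈ T} → A) := fun x i => x i with hr
  have hinj : Set.InjOn r C := by
    intro x hx x' hx' hrr
    by_contra hne
    have hdisj := hC.2 x hx x' hx' hne
    have hT' : ∀ i, i ∈ T → x i = x' i := by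
      intro i hi
      exact congrFun hrr ⟨i, hi⟩
    have hout : ∀ i, (∀ ℓ, i ∉ U ℓ) → x i = x' i := by
      intro i hiU
      apply hT'
      rw [hT, Finset.mem_sdiff]
      refine ⟨Finset.mem_univ _, ?_⟩
      intro hc
      obtain ⟨ℓ, -, hℓ⟩ := Finset.mem_biUnion.mp hc
      exact hiU ℓ (hSU ℓ hℓ)
    have hcl : ∀ ℓ, ((U ℓ).filter fun i => x i ≠ x' i).card ≤ 2 * t ℓ + e ℓ := by
      intro ℓ
      have hsub : ((U ℓ).filter fun i => x i ≠ x' i) ⊆ S ℓ := by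
        intro i hi
        rw [Finset.mem_filter] at hi
        obtain ⟨hiU, hix⟩ := hi
        have hiT : i ∉ T := fun hiT => hix (hT' i hiT)
        rw [hT, Finset.mem_sdiff] at hiT
        push_neg at hiT
        obtain ⟨ℓ', -, hℓ'⟩ := Finset.mem_biUnion.mp (hiT (Finset.mem_univ _))
        rwa [huniq (hSU ℓ' hℓ') hiU] at hℓ'
      calc ((U ℓ).filter fun i => x i ≠ x' i).card ≤ (S ℓ).card := Finset.card_le_card hsub
        _ = m ℓ := hScard ℓ
        _ ≤ 2 * t ℓ + e ℓ := min_le_left _ _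
    exact (hb_close_inter hU hout hcl).ne_empty hdisj
  have hle : C.card ≤ Fintype.card ({i : Fin s // i ∈ T} → A) := by
    rw [← Finset.card_univ]
    exact Finset.card_le_card_of_injOn r (fun x _ => Finset.mem_univ _) hinj
  have hTcard : T.card = s - ∑ ℓ, m ℓ := by
    rw [hT, Finset.card_sdiff_of_subset (Finset.subset_univ _), Finset.card_univ, Fintype.card_fin]
    congr 1
    rw [Finset.card_biUnion]
    · exact Finset.sum_congr rfl (fun ℓ _ => hScard ℓ)
    · intro ℓ _ ℓ' _ h
      exact Finset.disjoint_of_subset_left (hSU ℓ) (Finset.disjoint_of_subset_right (hSU ℓ') (hU ℓ ℓ' h))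
  rw [Fintype.card_fun, Fintype.card_coe, hTcard] at hle
  exact hle
end AuxUB

/-- for all sufficiently large finite fields (taken as the alphabet),
`C(H_{t,e}⟨U⟩) = s − Σ_ℓ min{2t_ℓ+e_ℓ, |U_ℓ|}`. -/
theorem capBase_HB_eq_of_large_field {s L : ℕ} (hs : 1 ≤ s) (hL : 1 ≤ L)
    (U : Fin L → Finset (Fin s))
    (hU : ∀ ℓ ℓ', ℓ ≠ ℓ' → Disjoint (U ℓ) (U ℓ'))
    (t e : Fin L → ℕ) :
    ∃ q0 : ℕ, ∀ (F : Type) [Field F] [Fintype F] [DecidableEq F],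
      q0 ≤ Fintype.card F →
      capBase (Fintype.card F) (HB (A := F) t e U)
        = (s : ℝ) - ∑ ℓ : Fin L, ((min (2 * t ℓ + e ℓ) ((U ℓ).card) : ℕ) : ℝ) := by
  refine ⟨s + 2, ?_⟩
  intro F _ _ _ hq
  set q := Fintype.card F with hqdef
  have hq1 : 1 < q := by omega
  obtain ⟨ι⟩ : Nonempty (Fin s ↪ F) := by
    apply Function.Embedding.nonempty_of_card_le
    rw [Fintype.card_fin]
    omega
  set K := s - ∑ ℓ, min (2 * t ℓ + e ℓ) (U ℓ).card with hK
  obtain ⟨C0, hgood0, hcard0⟩ := exists_good_code F U hU t e ι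
  have hmax : maxGoodCode (HB (A := F) t e U) = q ^ K := by
    apply le_antisymm
    · refine csSup_le ⟨C0.card, C0, hgood0, rfl⟩ ?_
      rintro n ⟨C, hC, rfl⟩
      exact good_code_card_le hU hC
    · apply le_csSup
      · refine ⟨q ^ K, ?_⟩
        rintro n ⟨C, hC, rfl⟩
        exact good_code_card_le hU hC
      · exact ⟨C0, hgood0, hcard0⟩
  have hsum_le : ∑ ℓ, min (2 * t ℓ + e ℓ) (U ℓ).card ≤ s := by
    have h1 : ∑ ℓ, min (2 * t ℓ + e ℓ) (U ℓ).card ≤ ∑ ℓ, (U ℓ).card :=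
      Finset.sum_le_sum (fun ℓ _ => min_le_right _ _)
    have h2 : (Finset.univ.biUnion U).card = ∑ ℓ, (U ℓ).card :=
      Finset.card_biUnion (fun ℓ _ ℓ' _ h => hU ℓ ℓ' h)
    have h3 : (Finset.univ.biUnion U).card ≤ s := by
      simpa using Finset.card_le_univ (Finset.univ.biUnion U)
    omega
  have hb : (1 : ℝ) < (q : ℝ) := by exact_mod_cast hq1
  have hlogb : Real.logb q ((q : ℝ) ^ K) = K := by
    rw [Real.logb_pow, Real.logb_self_eq_one hb, mul_one]
  have hcast : ((q ^ K : ℕ) : ℝ) = (q : ℝ) ^ K := by push_cast; ring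
  unfold capBase
  rw [hmax, hcast, hlogb, hK, Nat.cast_sub hsum_le, Nat.cast_sum]
end

section
/- Let L ≥ 1, let U_1,...,U_L ⊆ {1,...,s} be pairwise disjoint, let t = (t_1,...,t_L), e = (e_1,...,e_L) be tuples of nonnegative integers, and set σ_ℓ = min{2t_ℓ + e_ℓ, |U_ℓ|} and σ = σ_1 + ⋯ + σ_L. Then there exist a set Ū ⊆ {1,...,s} with |Ū| = σ and L-tuples V = (V_1,...,V_L), V' = (V'_1,...,V'_L) with V_ℓ, V'_ℓ ⊆ U_ℓ and |V_ℓ| ≤ t_ℓ + e_ℓ, |V'_ℓ| ≤ t_ℓ + e_ℓ for all ℓ, such that for any x, x' ∈ A^s with x_i = x'_i for all i ∈ {1,...,s} \ Ū, the fan-out sets intersect: H_{t,e}⟨V⟩(x) ∩ H_{t,e}⟨V'⟩(x') ≠ ∅. -/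
open Set

/-- there exist a set `Ū` of cardinality `σ = Σ_ℓ min{2t_ℓ+e_ℓ, |U_ℓ|}`
and tuples `V, V' ⊆ U` with `|V_ℓ|, |V'_ℓ| ≤ t_ℓ + e_ℓ` such that the fan-out sets
`H_{t,e}⟨V⟩(x)` and `H_{t,e}⟨V'⟩(x')` intersect whenever `x` and `x'` agree outside `Ū`. -/
theorem exists_confusing_tuples {A : Type*} [Fintype A] [DecidableEq A]
    (hA : 2 ≤ Fintype.card A) {s L : ℕ} (hs : 1 ≤ s) (hL : 1 ≤ L)
    (U : Fin L → Finset (Fin s))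
    (hU : ∀ ℓ ℓ', ℓ ≠ ℓ' → Disjoint (U ℓ) (U ℓ'))
    (t e : Fin L → ℕ) :
    ∃ (Ubar : Finset (Fin s)) (V V' : Fin L → Finset (Fin s)),
      Ubar.card = ∑ ℓ : Fin L, min (2 * t ℓ + e ℓ) ((U ℓ).card) ∧
      (∀ ℓ, V ℓ ⊆ U ℓ ∧ V' ℓ ⊆ U ℓ ∧
        (V ℓ).card ≤ t ℓ + e ℓ ∧ (V' ℓ).card ≤ t ℓ + e ℓ) ∧
      ∀ x x' : Fin s → A, (∀ i, i ∉ Ubar → x i = x' i) →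
        (HB (A := A) t e V x ∩ HB (A := A) t e V' x').Nonempty := by

  classical
  -- choose S ℓ ⊆ U ℓ of cardinality min (2t+e) |U ℓ|
  have hS : ∀ ℓ, ∃ S ⊆ U ℓ, S.card = min (2 * t ℓ + e ℓ) ((U ℓ).card) :=
    fun ℓ => Finset.exists_subset_card_eq (min_le_right _ _)
  choose S hSsub hScard using hS
  have hT : ∀ ℓ, ∃ T ⊆ S ℓ, T.card = min (t ℓ) ((S ℓ).card) :=
    fun ℓ => Finset.exists_subset_card_eq (min_le_right _ _)
  choose T hTsub hTcard using hT
  have hE : ∀ ℓ, ∃ E ⊆ S ℓ \ T ℓ, E.card = min (e ℓ) ((S ℓ \ T ℓ).card) :=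
    fun ℓ => Finset.exists_subset_card_eq (min_le_right _ _)
  choose E hEsub hEcard using hE
  set T' : Fin L → Finset (Fin s) := fun ℓ => (S ℓ \ T ℓ) \ E ℓ with hT'def
  -- basic inclusions
  have hTU : ∀ ℓ, T ℓ ⊆ U ℓ := fun ℓ => (hTsub ℓ).trans (hSsub ℓ)
  have hEinS : ∀ ℓ, E ℓ ⊆ S ℓ := fun ℓ => (hEsub ℓ).trans (Finset.sdiff_subset)
  have hEU : ∀ ℓ, E ℓ ⊆ U ℓ := fun ℓ => (hEinS ℓ).trans (hSsub ℓ)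
  have hT'S : ∀ ℓ, T' ℓ ⊆ S ℓ := fun ℓ => (Finset.sdiff_subset).trans Finset.sdiff_subset
  have hT'U : ∀ ℓ, T' ℓ ⊆ U ℓ := fun ℓ => (hT'S ℓ).trans (hSsub ℓ)
  -- positions in U ℓ determine ℓ
  have huniq : ∀ {ℓ ℓ' : Fin L} {i : Fin s}, i ∈ U ℓ → i ∈ U ℓ' → ℓ = ℓ' := by
    intro ℓ ℓ' i h h'
    by_contra hne
    exact Finset.disjoint_left.mp (hU ℓ ℓ' hne) h h'
  -- disjointness within S ℓ
  have hTE : ∀ ℓ, Disjoint (T ℓ) (E ℓ) := by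
    intro ℓ
    refine Finset.disjoint_left.mpr fun i hi hi' => ?_
    exact (Finset.mem_sdiff.mp (hEsub ℓ hi')).2 hi
  have hTT' : ∀ ℓ, Disjoint (T ℓ) (T' ℓ) := by
    intro ℓ
    refine Finset.disjoint_left.mpr fun i hi hi' => ?_
    exact (Finset.mem_sdiff.mp (Finset.mem_sdiff.mp hi').1).2 hi
  have hET' : ∀ ℓ, Disjoint (E ℓ) (T' ℓ) := by
    intro ℓ
    refine Finset.disjoint_left.mpr fun i hi hi' => ?_
    exact (Finset.mem_sdiff.mp hi').2 hi
  -- cardinality facts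
  have hT'card : ∀ ℓ, (T' ℓ).card = (S ℓ).card - (T ℓ).card - (E ℓ).card := by
    intro ℓ
    rw [hT'def]
    rw [Finset.card_sdiff_of_subset (hEsub ℓ), Finset.card_sdiff_of_subset (hTsub ℓ)]
  have hcards : ∀ ℓ, (T ℓ).card ≤ t ℓ ∧ (E ℓ).card ≤ e ℓ ∧ (T' ℓ).card ≤ t ℓ := by
    intro ℓ
    have h1 := hTcard ℓ
    have h2 := hEcard ℓ
    have h3 := hT'card ℓ
    have h4 := hScard ℓ
    have h5 : (S ℓ \ T ℓ).card = (S ℓ).card - (T ℓ).card := Finset.card_sdiff_of_subset (hTsub ℓ)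
    have h6 : (S ℓ).card ≤ 2 * t ℓ + e ℓ := by rw [h4]; exact min_le_left _ _
    refine ⟨?_, ?_, ?_⟩ <;> omega
  -- the sets
  refine ⟨Finset.univ.biUnion S, fun ℓ => T ℓ ∪ E ℓ, fun ℓ => T' ℓ ∪ E ℓ, ?_, ?_, ?_⟩
  · rw [Finset.card_biUnion]
    · exact Finset.sum_congr rfl fun ℓ _ => hScard ℓ
    · intro ℓ _ ℓ' _ hne
      exact (hU ℓ ℓ' hne).mono (hSsub ℓ) (hSsub ℓ')
  · intro ℓ
    refine ⟨Finset.union_subset (hTU ℓ) (hEU ℓ), Finset.union_subset (hT'U ℓ) (hEU ℓ), ?_, ?_⟩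
    · calc (T ℓ ∪ E ℓ).card ≤ (T ℓ).card + (E ℓ).card := Finset.card_union_le _ _
        _ ≤ t ℓ + e ℓ := add_le_add (hcards ℓ).1 (hcards ℓ).2.1
    · calc (T' ℓ ∪ E ℓ).card ≤ (T' ℓ).card + (E ℓ).card := Finset.card_union_le _ _
        _ ≤ t ℓ + e ℓ := add_le_add (hcards ℓ).2.2 (hcards ℓ).2.1
  · intro x x' hxx
    set y : Fin s → Option A := fun i =>
      if i ∈ Finset.univ.biUnion T then some (x' i)
      else if i ∈ Finset.univ.biUnion E then none
      else some (x i) with hy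
    -- membership helpers
    have hmemT : ∀ {i ℓ}, i ∈ T ℓ → i ∈ Finset.univ.biUnion T :=
      fun {i ℓ} h => Finset.mem_biUnion.mpr ⟨ℓ, Finset.mem_univ _, h⟩
    have hmemE : ∀ {i ℓ}, i ∈ E ℓ → i ∈ Finset.univ.biUnion E :=
      fun {i ℓ} h => Finset.mem_biUnion.mpr ⟨ℓ, Finset.mem_univ _, h⟩
    have hnotTE : ∀ {i ℓ}, i ∈ E ℓ → i ∉ Finset.univ.biUnion T := by
      intro i ℓ hi hmem
      obtain ⟨ℓ', _, hi'⟩ := Finset.mem_biUnion.mp hmem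
      have : ℓ' = ℓ := huniq (hTU ℓ' hi') (hEU ℓ hi)
      subst this
      exact Finset.disjoint_left.mp (hTE ℓ') hi' hi
    have hnotT'T : ∀ {i ℓ}, i ∈ T' ℓ → i ∉ Finset.univ.biUnion T := by
      intro i ℓ hi hmem
      obtain ⟨ℓ', _, hi'⟩ := Finset.mem_biUnion.mp hmem
      have : ℓ' = ℓ := huniq (hTU ℓ' hi') (hT'U ℓ hi)
      subst this
      exact Finset.disjoint_left.mp (hTT' ℓ') hi' hi
    have hnotT'E : ∀ {i ℓ}, i ∈ T' ℓ → i ∉ Finset.univ.biUnion E := by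
      intro i ℓ hi hmem
      obtain ⟨ℓ', _, hi'⟩ := Finset.mem_biUnion.mp hmem
      have : ℓ' = ℓ := huniq (hEU ℓ' hi') (hT'U ℓ hi)
      subst this
      exact Finset.disjoint_left.mp (hET' ℓ') hi' hi
    -- values of y
    have hyT : ∀ {i ℓ}, i ∈ T ℓ → y i = some (x' i) := by
      intro i ℓ hi
      simp only [hy, if_pos (hmemT hi)]
    have hyE : ∀ {i ℓ}, i ∈ E ℓ → y i = none := by
      intro i ℓ hi
      simp only [hy, if_neg (hnotTE hi), if_pos (hmemE hi)]
    have hyT' : ∀ {i ℓ}, i ∈ T' ℓ → y i = some (x i) := by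
      intro i ℓ hi
      simp only [hy, if_neg (hnotT'T hi), if_neg (hnotT'E hi)]
    refine ⟨y, ?_, ?_⟩
    · -- y ∈ HB t e V x
      refine ⟨?_, fun ℓ => ⟨?_, ?_⟩⟩
      · intro i hi
        simp only [hy]
        rw [if_neg, if_neg]
        · intro hmem
          obtain ⟨ℓ, _, hi'⟩ := Finset.mem_biUnion.mp hmem
          exact hi ℓ (Finset.mem_union_right _ hi')
        · intro hmem
          obtain ⟨ℓ, _, hi'⟩ := Finset.mem_biUnion.mp hmem
          exact hi ℓ (Finset.mem_union_left _ hi')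
      · -- discrepancy ≤ t ℓ
        have hsub : ((T ℓ ∪ E ℓ).filter fun i => y i ≠ none ∧ y i ≠ some (x i)) ⊆ T ℓ := by
          intro i hi
          obtain ⟨hiV, hP⟩ := Finset.mem_filter.mp hi
          rcases Finset.mem_union.mp hiV with h | h
          · exact h
          · exact absurd (hyE h) hP.1
        calc discrepancy y x (T ℓ ∪ E ℓ) ≤ (T ℓ).card := Finset.card_le_card hsub
          _ ≤ t ℓ := (hcards ℓ).1
      · -- erasure weight ≤ e ℓ
        have hsub : ((T ℓ ∪ E ℓ).filter fun i => y i = none) ⊆ E ℓ := by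
          intro i hi
          obtain ⟨hiV, hP⟩ := Finset.mem_filter.mp hi
          rcases Finset.mem_union.mp hiV with h | h
          · exact absurd hP (by rw [hyT h]; simp)
          · exact h
        calc erasureWeight y (T ℓ ∪ E ℓ) ≤ (E ℓ).card := Finset.card_le_card hsub
          _ ≤ e ℓ := (hcards ℓ).2.1
    · -- y ∈ HB t e V' x'
      refine ⟨?_, fun ℓ => ⟨?_, ?_⟩⟩
      · intro i hi
        have hiE : i ∉ Finset.univ.biUnion E := by
          intro hmem
          obtain ⟨ℓ, _, hi'⟩ := Finset.mem_biUnion.mp hmem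
          exact hi ℓ (Finset.mem_union_right _ hi')
        by_cases hiT : i ∈ Finset.univ.biUnion T
        · simp only [hy, if_pos hiT]
        · have hiU : i ∉ Finset.univ.biUnion S := by
            intro hmem
            obtain ⟨ℓ, _, hi'⟩ := Finset.mem_biUnion.mp hmem
            by_cases h1 : i ∈ T ℓ
            · exact hiT (hmemT h1)
            · by_cases h2 : i ∈ E ℓ
              · exact hiE (hmemE h2)
              · exact hi ℓ (Finset.mem_union_left _
                  (Finset.mem_sdiff.mpr ⟨Finset.mem_sdiff.mpr ⟨hi', h1⟩, h2⟩))
          simp only [hy, if_neg hiT, if_neg hiE]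
          rw [hxx i hiU]
      · -- discrepancy for x' ≤ t ℓ
        have hsub : ((T' ℓ ∪ E ℓ).filter fun i => y i ≠ none ∧ y i ≠ some (x' i)) ⊆ T' ℓ := by
          intro i hi
          obtain ⟨hiV, hP⟩ := Finset.mem_filter.mp hi
          rcases Finset.mem_union.mp hiV with h | h
          · exact h
          · exact absurd (hyE h) hP.1
        calc discrepancy y x' (T' ℓ ∪ E ℓ) ≤ (T' ℓ).card := Finset.card_le_card hsub
          _ ≤ t ℓ := (hcards ℓ).2.2
      · have hsub : ((T' ℓ ∪ E ℓ).filter fun i => y i = none) ⊆ E ℓ := by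
          intro i hi
          obtain ⟨hiV, hP⟩ := Finset.mem_filter.mp hi
          rcases Finset.mem_union.mp hiV with h | h
          · exact absurd hP (by rw [hyT' h]; simp)
          · exact h
        calc erasureWeight y (T' ℓ ∪ E ℓ) ≤ (E ℓ).card := Finset.card_le_card hsub
          _ ≤ e ℓ := (hcards ℓ).2.1
end

section
/- Let L ≥ 1, let U_1,...,U_L ⊆ {1,...,s} be arbitrary (possibly overlapping) sets, and let t_1,...,t_L ≥ 0 be integers. Then the union over all permutations p of {1,...,L} of the concatenations H_{t_{p(1)}}⟨U_{p(1)}⟩ ▸ ⋯ ▸ H_{t_{p(L)}}⟨U_{p(L)}⟩ equals the single concatenation H_{t_1}⟨U_1⟩ ▸ ⋯ ▸ H_{t_L}⟨U_L⟩. -/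
open Set

/-- The error-only Hamming channel `H_t⟨U⟩ : A^s ⇝ A^s`. -/
def HE {A : Type*} [DecidableEq A] {s : ℕ} (t : ℕ) (U : Finset (Fin s)) :
    (Fin s → A) → Set (Fin s → A) :=
  fun x => {y | (∀ i, i ∉ U → y i = x i) ∧ (U.filter fun i => y i ≠ x i).card ≤ t}

/-- The concatenation `H_{t 0}⟨U 0⟩ ▸ ⋯ ▸ H_{t (L-1)}⟨U (L-1)⟩`. -/
def HT {A : Type*} [DecidableEq A] {s L : ℕ} (t : Fin L → ℕ)
    (U : Fin L → Finset (Fin s)) :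
    (Fin s → A) → Set (Fin s → A) :=
  chainList (List.ofFn fun ℓ => HE (t ℓ) (U ℓ))

/-- The adversarial strength `σ_t⟨U⟩`. -/
noncomputable def advStrength {s L : ℕ} (t : Fin L → ℕ)
    (U : Fin L → Finset (Fin s)) : ℕ :=
  sSup {σ : ℕ | ∃ V W : Fin L → Finset (Fin s),
    (∀ ℓ, V ℓ ⊆ U ℓ ∧ W ℓ ⊆ U ℓ ∧ (V ℓ).card ≤ t ℓ ∧ (W ℓ).card ≤ t ℓ) ∧
    σ = (Finset.univ.biUnion fun ℓ => V ℓ ∪ W ℓ).card}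

/-- The compound channel `H_t⟨U⟩^{n,rest}`. -/
def HTcomp {A : Type*} [DecidableEq A] {s L : ℕ} (t : Fin L → ℕ)
    (U : Fin L → Finset (Fin s)) (n : ℕ) :
    (Fin n → Fin s → A) → Set (Fin n → Fin s → A) :=
  fun x => ⋃ (V : Fin L → Finset (Fin s))
      (_ : ∀ ℓ, V ℓ ⊆ U ℓ ∧ (V ℓ).card ≤ t ℓ),
    chPow (HT t V) n x

/-- The compound zero-error capacity of `H_t⟨U⟩`, base `q`. -/
noncomputable def HTcompCap (A : Type*) [Fintype A] [DecidableEq A] {s L : ℕ}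
    (q : ℕ) (t : Fin L → ℕ) (U : Fin L → Finset (Fin s)) : ℝ :=
  sSup {r : ℝ | ∃ n : ℕ, 1 ≤ n ∧ r = capBase q (HTcomp (A := A) t U n) / n}

lemma chConcat_assoc {W : Type*} (a b c : W → Set W) :
    chConcat (chConcat a b) c = chConcat a (chConcat b c) := by
  funext x
  ext z
  simp only [chConcat, Set.mem_iUnion]
  constructor
  · rintro ⟨y, ⟨w, hw, hy⟩, hz⟩
    exact ⟨w, hw, y, hy, hz⟩
  · rintro ⟨w, hw, y, hy, hz⟩
    exact ⟨y, ⟨w, hw, hy⟩, hz⟩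

lemma HE_comm_aux {A : Type*} [DecidableEq A] {s : ℕ} (t1 t2 : ℕ)
    (U1 U2 : Finset (Fin s)) (x z : Fin s → A)
    (hz : z ∈ chConcat (HE t1 U1) (HE t2 U2) x) :
    z ∈ chConcat (HE t2 U2) (HE t1 U1) x := by
  simp only [chConcat, Set.mem_iUnion] at hz ⊢
  obtain ⟨y, hy, hzy⟩ := hz
  obtain ⟨hy1, hy2⟩ := hy
  obtain ⟨hzy1, hzy2⟩ := hzy
  refine ⟨fun i => if z i = y i then x i else z i, ⟨?_, ?_⟩, ?_, ?_⟩
  · intro i hi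
    by_cases h : z i = y i
    · simp [h]
    · exact absurd (hzy1 i hi) fun he => h he
  · refine le_trans (Finset.card_le_card ?_) hzy2
    intro i hi
    simp only [Finset.mem_filter] at hi ⊢
    refine ⟨hi.1, fun h => hi.2 ?_⟩
    simp [h]
  · intro i hi
    by_cases h : z i = y i
    · simp only [if_pos h]
      rw [h, hy1 i hi]
    · simp [h]
  · refine le_trans (Finset.card_le_card ?_) hy2
    intro i hi
    simp only [Finset.mem_filter] at hi ⊢
    refine ⟨hi.1, fun h => ?_⟩
    by_cases hzyi : z i = y i
    · exact hi.2 (by rw [if_pos hzyi, hzyi, h])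
    · exact hi.2 (by simp [hzyi])

lemma HE_comm {A : Type*} [DecidableEq A] {s : ℕ} (t1 t2 : ℕ)
    (U1 U2 : Finset (Fin s)) :
    chConcat (HE (A := A) t1 U1) (HE t2 U2)
      = chConcat (HE (A := A) t2 U2) (HE t1 U1) := by
  funext x
  ext z
  exact ⟨HE_comm_aux t1 t2 U1 U2 x z, HE_comm_aux t2 t1 U2 U1 x z⟩

lemma chainList_perm {W : Type*} {l l' : List (W → Set W)} (h : l.Perm l')
    (hc : ∀ a ∈ l, ∀ b ∈ l, chConcat a b = chConcat b a) :
    chainList l = chainList l' := by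
  induction h with
  | nil => rfl
  | cons a h ih =>
      show chConcat a _ = chConcat a _
      rw [ih fun a ha b hb => hc a (List.mem_cons_of_mem _ ha) b
        (List.mem_cons_of_mem _ hb)]
  | swap a b l =>
      show chConcat b (chConcat a (chainList l))
        = chConcat a (chConcat b (chainList l))
      rw [← chConcat_assoc, hc b (by simp) a (by simp), chConcat_assoc]
  | trans h1 h2 ih1 ih2 =>
      rw [ih1 hc, ih2 fun a ha b hb =>
        hc a (h1.mem_iff.mpr ha) b (h1.mem_iff.mpr hb)]

lemma ofFn_comp_perm {n : ℕ} {W : Type*} (f : Fin n → W) (p : Equiv.Perm (Fin n)) :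
    (List.ofFn fun i => f (p i)).Perm (List.ofFn f) := by
  rw [List.ofFn_eq_map, List.ofFn_eq_map, show ((fun i => f (p i)) = f ∘ p) from rfl,
    ← List.map_map]
  refine List.Perm.map f ?_
  refine (List.perm_ext_iff_of_nodup
    ((List.nodup_finRange n).map p.injective) (List.nodup_finRange n)).mpr ?_
  intro a
  simp [List.mem_map]
  exact ⟨p.symm a, by simp⟩

/-- the union over all permutations `p` of the concatenations
`H_{t_{p(1)}}⟨U_{p(1)}⟩ ▸ ⋯ ▸ H_{t_{p(L)}}⟨U_{p(L)}⟩` equals the single concatenation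
`H_{t_1}⟨U_1⟩ ▸ ⋯ ▸ H_{t_L}⟨U_L⟩`. -/
theorem chUnion_perm_chainList_HE {A : Type*} [Fintype A] [DecidableEq A]
    (hA : 2 ≤ Fintype.card A) {s L : ℕ} (hs : 1 ≤ s) (hL : 1 ≤ L)
    (U : Fin L → Finset (Fin s)) (t : Fin L → ℕ) :
    chUnion (fun p : Equiv.Perm (Fin L) =>
        chainList (List.ofFn fun ℓ => HE (A := A) (t (p ℓ)) (U (p ℓ))))
      = chainList (List.ofFn fun ℓ => HE (A := A) (t ℓ) (U ℓ)) := by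
  have hc : ∀ a ∈ (List.ofFn fun ℓ => HE (A := A) (t ℓ) (U ℓ)),
      ∀ b ∈ (List.ofFn fun ℓ => HE (A := A) (t ℓ) (U ℓ)),
      chConcat a b = chConcat b a := by
    intro a ha b hb
    rw [List.mem_ofFn] at ha hb
    obtain ⟨i, rfl⟩ := ha
    obtain ⟨j, rfl⟩ := hb
    exact HE_comm _ _ _ _
  have key : ∀ p : Equiv.Perm (Fin L),
      chainList (List.ofFn fun ℓ => HE (A := A) (t (p ℓ)) (U (p ℓ)))
        = chainList (List.ofFn fun ℓ => HE (A := A) (t ℓ) (U ℓ)) := by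
    intro p
    refine chainList_perm (ofFn_comp_perm (fun ℓ => HE (A := A) (t ℓ) (U ℓ)) p)
      fun a ha b hb => ?_
    exact hc a ((ofFn_comp_perm _ p).mem_iff.mp ha) b
      ((ofFn_comp_perm _ p).mem_iff.mp hb)
  funext x
  simp only [chUnion]
  rw [show (fun p : Equiv.Perm (Fin L) =>
    chainList (List.ofFn fun ℓ => HE (A := A) (t (p ℓ)) (U (p ℓ))) x)
    = fun _ => chainList (List.ofFn fun ℓ => HE (A := A) (t ℓ) (U ℓ)) x
    from funext fun p => congrFun (key p) x, Set.iUnion_const]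
end
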